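/- Let R = ({q₀}, {q₁}, T) be a two-dimensional robot game with transitions T ⊆ Q × [−V; V]² × Q (Q = {q₀, q₁}, V ∈ ℕ) and initial configuration (q₀, (x₀, y₀)) ∈ Q × ℤ². Let G be the 3-dimensional weighted game with P₀-states {q_init, q₀, q_stop}, P₁-state {q₁}, and edges: (q, (a, b, −a−b), q') for each (q, (a, b), q') ∈ T; (q₀, (−1, −1, −1), q_stop); (q_stop, (0, 0, 0), q_stop); and (q_init, (x₀+1, y₀+1, −x₀−y₀+1), q₀). Then P₀ has a winning strategy in G from q_init for the multi-dimensional average-energy objective AE((0,0,0)) if, and only if, P₀ wins the robot game R from (q₀, (x₀, y₀)). -/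

import Mathlib

/-!
Every robot edge `(a, b, -a-b)` of `G` has coordinate sum `0`, while the initial edge adds `3`
and the stop edge `-3`. So along a play that never stops the three energy levels sum to `3`
forever, and `AE((0,0,0))` fails. If instead `G` stops after following the robot for `n` steps,
its energy levels freeze at `(x, y, -x-y)`, where `(x, y)` is the robot position at that moment;
the averages converge to these values, which are all `≤ 0` exactly when `(x, y) = (0, 0)`.
A winning strategy in `G` is therefore a robot strategy together with a rule that stops exactly
at the origin in `q₀`, i.e. a winning strategy in `R`.
-/

namespace RobotReduction

/-- An edge with a weight in `β` over a state space `α`. -/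
abbrev VEdge (α β : Type*) : Type _ := α × β × α

variable {α β : Type*}

/-- A play from `s`: an infinite sequence of consecutive edges of `E` starting at `s`. -/
def IsPlay (E : Set (VEdge α β)) (s : α) (π : ℕ → VEdge α β) : Prop :=
  (∀ i, π i ∈ E) ∧ (π 0).1 = s ∧ ∀ i, (π i).2.2 = (π (i + 1)).1

/-- The state reached after following the finite prefix `ρ` from `s`. -/
def EndSt (s : α) (ρ : List (VEdge α β)) : α :=
  (ρ.getLast?.map (fun e => e.2.2)).getD s

/-- `ρ` is a finite play prefix from `s` in the graph with edge set `E`. -/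
def IsPrefixFrom (E : Set (VEdge α β)) (s : α) (ρ : List (VEdge α β)) : Prop :=
  (∀ e ∈ ρ, e ∈ E) ∧ List.Chain' (fun e f => e.2.2 = f.1) ρ ∧
    ∀ e, ρ.head? = some e → e.1 = s

/-- A strategy (of the player owning the states in `S0`) from `s`. -/
def IsStrategy (E : Set (VEdge α β)) (S0 : Set α) (s : α)
    (σ : List (VEdge α β) → VEdge α β) : Prop :=
  ∀ ρ, IsPrefixFrom E s ρ → EndSt s ρ ∈ S0 → σ ρ ∈ E ∧ (σ ρ).1 = EndSt s ρ

/-- The length-`n` prefix of a play, as a list of edges. -/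
def Pref (π : ℕ → VEdge α β) (n : ℕ) : List (VEdge α β) :=
  List.ofFn (fun i : Fin n => π i)

/-- `π` is an outcome of the strategy `σ` (for the player owning `S0`) from `s`. -/
def IsOutcome (E : Set (VEdge α β)) (S0 : Set α) (s : α)
    (σ : List (VEdge α β) → VEdge α β) (π : ℕ → VEdge α β) : Prop :=
  IsPlay E s π ∧ ∀ n, EndSt s (Pref π n) ∈ S0 → π n = σ (Pref π n)

/-- The state visited at position `n` along a play from `s`. -/
def StAt (s : α) (π : ℕ → VEdge α β) : ℕ → α
  | 0 => s
  | n + 1 => (π n).2.2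

/-- Energy level, in one coordinate `w`, of the length-`n` prefix of `π`. -/
def ELc (w : VEdge α β → ℤ) (π : ℕ → VEdge α β) (n : ℕ) : ℤ :=
  ∑ i ∈ Finset.range n, w (π i)

/-- Average-energy, in one coordinate `w`, of the length-`n` prefix of `π`. -/
def AEc (w : VEdge α β → ℤ) (π : ℕ → VEdge α β) (n : ℕ) : ℚ :=
  (∑ i ∈ Finset.range n, (ELc w π (i + 1) : ℚ)) / (n : ℚ)

/-- `limsup_{n → ∞} f n ≤ t` (ε-characterization, valid in `ℚ`). -/
def LimsupLE (f : ℕ → ℚ) (t : ℚ) : Prop :=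
  ∀ ε : ℚ, 0 < ε → ∃ N, ∀ n ≥ N, f n ≤ t + ε

/-- The two states of a robot game: `q₀` belongs to `P₀`, `q₁` to `P₁`. -/
inductive RQ
  | q0 | q1
deriving DecidableEq

/-- The states of the constructed 3-dimensional game:
`q_init`, `q₀`, `q_stop` belong to `P₀` and `q₁` to `P₁`. -/
inductive GS
  | qinit | q0 | q1 | qstop
deriving DecidableEq

/-- Embedding of the robot-game states into the constructed game. -/
def emb : RQ → GS
  | RQ.q0 => GS.q0
  | RQ.q1 => GS.q1

/-- The edges of the constructed 3-dimensional game `G`: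
`(q, (a, b, −a−b), q')` for each robot transition `(q, (a,b), q')`;
`(q₀, (−1,−1,−1), q_stop)`; `(q_stop, (0,0,0), q_stop)`; and
`(q_init, (x₀+1, y₀+1, −x₀−y₀+1), q₀)`. -/
def GE (T : Set (VEdge RQ (ℤ × ℤ))) (x₀ y₀ : ℤ) : Set (VEdge GS (ℤ × ℤ × ℤ)) :=
  {e | (∃ (q : RQ) (a b : ℤ) (q' : RQ), (q, (a, b), q') ∈ T ∧
          e = (emb q, (a, b, -a - b), emb q')) ∨
       e = (GS.q0, (-1, -1, -1), GS.qstop) ∨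
       e = (GS.qstop, (0, 0, 0), GS.qstop) ∨
       e = (GS.qinit, (x₀ + 1, y₀ + 1, -x₀ - y₀ + 1), GS.q0)}

/-- `P₀` wins the robot game `R = ({q₀}, {q₁}, T)` from `(q₀, (x₀, y₀))`: he has a
strategy all of whose outcomes eventually reach the configuration `(q₀, (0, 0))`. -/
def RobotWin (T : Set (VEdge RQ (ℤ × ℤ))) (x₀ y₀ : ℤ) : Prop :=
  ∃ σ, IsStrategy T {RQ.q0} RQ.q0 σ ∧
    ∀ π, IsOutcome T {RQ.q0} RQ.q0 σ π →
      ∃ n, StAt RQ.q0 π n = RQ.q0 ∧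
        x₀ + ∑ i ∈ Finset.range n, (π i).2.1.1 = 0 ∧
        y₀ + ∑ i ∈ Finset.range n, (π i).2.1.2 = 0

/-- `P₀` wins the constructed game `G` from `q_init` for the 3-dimensional
average-energy objective `AE((0,0,0))` (componentwise `AEsup ≤ 0`). -/
def GWin (T : Set (VEdge RQ (ℤ × ℤ))) (x₀ y₀ : ℤ) : Prop :=
  ∃ σ, IsStrategy (GE T x₀ y₀) {GS.qinit, GS.q0, GS.qstop} GS.qinit σ ∧
    ∀ π, IsOutcome (GE T x₀ y₀) {GS.qinit, GS.q0, GS.qstop} GS.qinit σ π →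
      LimsupLE (AEc (fun e => e.2.1.1) π) 0 ∧
      LimsupLE (AEc (fun e => e.2.1.2.1) π) 0 ∧
      LimsupLE (AEc (fun e => e.2.1.2.2) π) 0

open Filter Topology

local notation "REdge" => VEdge RQ (ℤ × ℤ)
local notation "GEdge" => VEdge GS (ℤ × ℤ × ℤ)

section Plays

lemma endSt_append_singleton (s : α) (l : List (VEdge α β)) (e : VEdge α β) :
    EndSt s (l ++ [e]) = e.2.2 := by
  simp [EndSt]

lemma pref_succ (π : ℕ → VEdge α β) (n : ℕ) : Pref π (n + 1) = Pref π n ++ [π n] := by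
  rw [Pref, List.ofFn_succ', List.concat_eq_append]
  simp [Pref]

lemma endSt_pref (s : α) (π : ℕ → VEdge α β) (n : ℕ) :
    EndSt s (Pref π n) = StAt s π n := by
  cases n with
  | zero => rfl
  | succ n => rw [pref_succ, endSt_append_singleton]; rfl

lemma pref_map {γ δ : Type*} (f : VEdge α β → VEdge γ δ) (π : ℕ → VEdge α β)
    (n : ℕ) :
    Pref (f ∘ π) n = (Pref π n).map f := by
  rw [Pref, Pref, List.map_ofFn]
  rfl

lemma tail_pref_succ (π : ℕ → VEdge α β) (n : ℕ) :
    (Pref π (n + 1)).tail = Pref (fun k => π (k + 1)) n := by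
  simp [Pref, List.ofFn_succ]

lemma pref_congr {π π' : ℕ → VEdge α β} {n : ℕ} (h : ∀ k < n, π k = π' k) :
    Pref π n = Pref π' n :=
  congrArg List.ofFn (funext fun k => h k k.2)

lemma eq_of_pref_eq {π π' : ℕ → VEdge α β} {n k : ℕ} (h : Pref π n = Pref π' n)
    (hk : k < n) :
    π k = π' k := by
  simpa [Pref] using congrFun (List.ofFn_injective h) ⟨k, hk⟩

lemma sum_map_pref {M : Type*} [AddCommMonoid M] (w : VEdge α β → M) (π : ℕ → VEdge α β)
    (n : ℕ) : ((Pref π n).map w).sum = ∑ i ∈ Finset.range n, w (π i) := by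
  rw [Pref, List.map_ofFn, List.sum_ofFn]
  exact Fin.sum_univ_eq_sum_range (fun i => w (π i)) n

lemma isPrefixFrom_nil (E : Set (VEdge α β)) (s : α) : IsPrefixFrom E s [] :=
  ⟨by simp, List.isChain_nil, by simp⟩

lemma isPrefixFrom_append_singleton_iff {E : Set (VEdge α β)} {s : α} {l : List (VEdge α β)}
    {e : VEdge α β} :
    IsPrefixFrom E s (l ++ [e]) ↔ IsPrefixFrom E s l ∧ e ∈ E ∧ e.1 = EndSt s l := by
  rcases l.eq_nil_or_concat with rfl | ⟨l, f, rfl⟩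
  · simp [IsPrefixFrom, EndSt, List.Chain', eq_comm, and_comm]
  · simp only [IsPrefixFrom, List.concat_eq_append, List.Chain', List.isChain_append,
      endSt_append_singleton]
    simp [or_imp, forall_and, eq_comm]
    tauto

lemma isPrefixFrom_pref_iff {E : Set (VEdge α β)} {s : α} {π : ℕ → VEdge α β} {n : ℕ} :
    IsPrefixFrom E s (Pref π n) ↔ ∀ k < n, π k ∈ E ∧ (π k).1 = StAt s π k := by
  induction n with
  | zero => simpa [Pref] using isPrefixFrom_nil E s
  | succ n ih =>
    rw [pref_succ, isPrefixFrom_append_singleton_iff, ih, endSt_pref, Nat.forall_lt_succ_right]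

lemma isPlay_iff {E : Set (VEdge α β)} {s : α} {π : ℕ → VEdge α β} :
    IsPlay E s π ↔ ∀ k, π k ∈ E ∧ (π k).1 = StAt s π k := by
  constructor
  · rintro ⟨hE, h0, hchain⟩ (_ | k)
    exacts [⟨hE 0, h0⟩, ⟨hE _, (hchain k).symm⟩]
  · intro h
    exact ⟨fun k => (h k).1, (h 0).2, fun k => ((h (k + 1)).2).symm⟩

lemma IsPlay.isPrefixFrom_pref {E : Set (VEdge α β)} {s : α} {π : ℕ → VEdge α β}
    (h : IsPlay E s π) (n : ℕ) : IsPrefixFrom E s (Pref π n) :=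
  isPrefixFrom_pref_iff.2 fun k _ => isPlay_iff.1 h k

end Plays

section Energy

lemma ELc_succ (w : VEdge α β → ℤ) (π : ℕ → VEdge α β) (n : ℕ) :
    ELc w π (n + 1) = ELc w π n + w (π n) :=
  Finset.sum_range_succ _ n

lemma ELc_congr {w : VEdge α β → ℤ} {π π' : ℕ → VEdge α β} {n : ℕ}
    (h : ∀ k < n, π k = π' k) : ELc w π n = ELc w π' n :=
  Finset.sum_congr rfl fun k hk => by rw [h k (Finset.mem_range.1 hk)]

lemma ELc_eq_of_forall_ge {w : VEdge α β → ℤ} {π : ℕ → VEdge α β} {N : ℕ}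
    (h : ∀ k ≥ N, w (π k) = 0) {n : ℕ} (hn : N ≤ n) : ELc w π n = ELc w π N := by
  induction n, hn using Nat.le_induction with
  | base => rfl
  | succ n hn ih => rw [ELc_succ, ih, h n hn, add_zero]

lemma AEc_add (w w' : VEdge α β → ℤ) (π : ℕ → VEdge α β) :
    AEc (w + w') π = AEc w π + AEc w' π := by
  ext n
  simp [AEc, ELc, Finset.sum_add_distrib, add_div]

lemma LimsupLE.add {f g : ℕ → ℚ} {s t : ℚ} (hf : LimsupLE f s) (hg : LimsupLE g t) :
    LimsupLE (f + g) (s + t) := by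
  intro ε hε
  obtain ⟨N, hN⟩ := hf (ε / 2) (by positivity)
  obtain ⟨M, hM⟩ := hg (ε / 2) (by positivity)
  refine ⟨max N M, fun n hn => ?_⟩
  have := hN n (le_of_max_le_left hn)
  have := hM n (le_of_max_le_right hn)
  simp only [Pi.add_apply]
  linarith

lemma limsupLE_iff_of_tendsto {f : ℕ → ℚ} {c : ℚ} (h : Tendsto f atTop (𝓝 c)) (t : ℚ) :
    LimsupLE f t ↔ c ≤ t := by
  constructor
  · intro hf
    by_contra! hlt
    obtain ⟨N, hN⟩ := hf ((c - t) / 2) (by linarith)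
    obtain ⟨n, hgt, hn⟩ := ((h.eventually (lt_mem_nhds (by linarith : t + (c - t) / 2 < c))).and
      (eventually_ge_atTop N)).exists
    linarith [hN n hn]
  · intro hct ε hε
    exact eventually_atTop.1 <| (h.eventually (gt_mem_nhds (by linarith : c < t + ε))).mono
      fun n hn => hn.le

lemma tendsto_average_of_tendsto {u : ℕ → ℚ} {c : ℚ} (h : Tendsto u atTop (𝓝 c)) :
    Tendsto (fun n : ℕ => (∑ i ∈ Finset.range n, u i) / n) atTop (𝓝 c) := by
  have hcast := Rat.isUniformEmbedding_coe_real.isUniformInducing.isInducing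
  refine hcast.tendsto_nhds_iff.2 ((hcast.tendsto_nhds_iff.1 h).cesaro.congr fun n => ?_)
  simp [div_eq_inv_mul]

lemma limsupLE_AEc_iff {w : VEdge α β → ℤ} {π : ℕ → VEdge α β} {N : ℕ} {c : ℤ}
    (h : ∀ n ≥ N, ELc w π n = c) (t : ℚ) : LimsupLE (AEc w π) t ↔ (c : ℚ) ≤ t := by
  refine limsupLE_iff_of_tendsto (tendsto_average_of_tendsto ?_) t
  refine tendsto_const_nhds.congr' ?_
  filter_upwards [eventually_ge_atTop N] with n hn
  rw [h (n + 1) (by omega)]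

end Energy

section Edges

variable {T : Set REdge} {x₀ y₀ : ℤ}

def initE (x₀ y₀ : ℤ) : GEdge := (GS.qinit, (x₀ + 1, y₀ + 1, -x₀ - y₀ + 1), GS.q0)

def stopE : GEdge := (GS.q0, (-1, -1, -1), GS.qstop)

def loopE : GEdge := (GS.qstop, (0, 0, 0), GS.qstop)

def liftEdge (f : REdge) : GEdge :=
  (emb f.1, (f.2.1.1, f.2.1.2, -f.2.1.1 - f.2.1.2), emb f.2.2)

/-- Left inverse of `emb`; its value at `qinit` and `qstop` is irrelevant. -/
def projState : GS → RQ
  | GS.q1 => RQ.q1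
  | _ => RQ.q0

def projEdge (e : GEdge) : REdge :=
  (projState e.1, (e.2.1.1, e.2.1.2.1), projState e.2.2)

lemma emb_injective : Function.Injective emb := by
  intro a b; cases a <;> cases b <;> simp [emb]

lemma projEdge_liftEdge (f : REdge) : projEdge (liftEdge f) = f := by
  obtain ⟨q, _, q'⟩ := f
  cases q <;> cases q' <;> rfl

lemma emb_ne_qinit (q : RQ) : emb q ≠ GS.qinit := by cases q <;> simp [emb]

lemma emb_ne_qstop (q : RQ) : emb q ≠ GS.qstop := by cases q <;> simp [emb]

lemma eq_q0_of_emb_mem {q : RQ} (h : emb q ∈ ({GS.qinit, GS.q0, GS.qstop} : Set GS)) :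
    q = RQ.q0 := by
  cases q <;> simp_all [emb]

lemma exists_emb_eq (s : GS) (hinit : s ≠ GS.qinit) (hstop : s ≠ GS.qstop) :
    ∃ q, emb q = s := by
  cases s
  exacts [absurd rfl hinit, ⟨RQ.q0, rfl⟩, ⟨RQ.q1, rfl⟩, absurd rfl hstop]

lemma liftEdge_ne_stopE (f : REdge) : liftEdge f ≠ stopE := by
  simp [liftEdge, stopE, emb_ne_qstop]

lemma liftEdge_mem_GE {f : REdge} (hf : f ∈ T) : liftEdge f ∈ GE T x₀ y₀ :=
  Or.inl ⟨f.1, f.2.1.1, f.2.1.2, f.2.2, hf, rfl⟩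

lemma stopE_mem_GE : stopE ∈ GE T x₀ y₀ := Or.inr (Or.inl rfl)

lemma loopE_mem_GE : loopE ∈ GE T x₀ y₀ := Or.inr (Or.inr (Or.inl rfl))

lemma initE_mem_GE : initE x₀ y₀ ∈ GE T x₀ y₀ := Or.inr (Or.inr (Or.inr rfl))

lemma mem_GE_cases {e : GEdge} (h : e ∈ GE T x₀ y₀) :
    (∃ f ∈ T, e = liftEdge f) ∨ e = stopE ∨ e = loopE ∨ e = initE x₀ y₀ := by
  rcases h with ⟨q, a, b, q', hT, rfl⟩ | h | h | h
  exacts [Or.inl ⟨(q, (a, b), q'), hT, rfl⟩, Or.inr (Or.inl h), Or.inr (Or.inr (Or.inl h)),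
    Or.inr (Or.inr (Or.inr h))]

lemma snd_snd_ne_qinit_of_mem_GE {e : GEdge} (h : e ∈ GE T x₀ y₀) :
    e.2.2 ≠ GS.qinit := by
  rcases mem_GE_cases h with ⟨f, -, rfl⟩ | rfl | rfl | rfl
  exacts [emb_ne_qinit _, nofun, nofun, nofun]

lemma eq_initE_of_mem_GE {e : GEdge} (h : e ∈ GE T x₀ y₀)
    (hs : e.1 = GS.qinit) : e = initE x₀ y₀ := by
  rcases mem_GE_cases h with ⟨f, -, rfl⟩ | rfl | rfl | rfl
  exacts [absurd hs (emb_ne_qinit _), absurd hs nofun, absurd hs nofun, rfl]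

lemma eq_loopE_of_mem_GE {e : GEdge} (h : e ∈ GE T x₀ y₀)
    (hs : e.1 = GS.qstop) : e = loopE := by
  rcases mem_GE_cases h with ⟨f, -, rfl⟩ | rfl | rfl | rfl
  exacts [absurd hs (emb_ne_qstop _), absurd hs nofun, rfl, absurd hs nofun]

lemma exists_liftEdge_of_mem_GE {e : GEdge} (h : e ∈ GE T x₀ y₀) {q : RQ}
    (hs : e.1 = emb q) (hne : e ≠ stopE) : ∃ f ∈ T, f.1 = q ∧ e = liftEdge f := by
  rcases mem_GE_cases h with ⟨f, hf, rfl⟩ | rfl | rfl | rfl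
  · exact ⟨f, hf, emb_injective hs, rfl⟩
  · exact absurd rfl hne
  · exact absurd hs.symm (emb_ne_qstop q)
  · exact absurd hs.symm (emb_ne_qinit q)

lemma eq_stopE_or_loopE_of_mem_GE {e : GEdge} (h : e ∈ GE T x₀ y₀)
    (ht : e.2.2 = GS.qstop) : e = stopE ∨ e = loopE := by
  rcases mem_GE_cases h with ⟨f, -, rfl⟩ | rfl | rfl | rfl
  exacts [absurd ht (emb_ne_qstop _), Or.inl rfl, Or.inr rfl, absurd ht nofun]

end Edges

section Lifting

variable {T : Set REdge} {x₀ y₀ : ℤ}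

def liftPrefix (x₀ y₀ : ℤ) (r : List REdge) : List GEdge :=
  initE x₀ y₀ :: r.map liftEdge

lemma tail_map_projEdge_liftPrefix (r : List REdge) :
    (liftPrefix x₀ y₀ r).tail.map projEdge = r := by
  simp [liftPrefix, Function.comp_def, projEdge_liftEdge]

lemma liftPrefix_append_singleton (r : List REdge) (f : REdge) :
    liftPrefix x₀ y₀ (r ++ [f]) = liftPrefix x₀ y₀ r ++ [liftEdge f] := by
  simp [liftPrefix]

lemma endSt_liftPrefix (r : List REdge) :
    EndSt GS.qinit (liftPrefix x₀ y₀ r) = emb (EndSt RQ.q0 r) := by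
  induction r using List.reverseRecOn with
  | nil => rfl
  | append_singleton r f _ =>
    rw [liftPrefix_append_singleton, endSt_append_singleton, endSt_append_singleton]
    rfl

lemma isPrefixFrom_liftPrefix {r : List REdge} (hr : IsPrefixFrom T RQ.q0 r) :
    IsPrefixFrom (GE T x₀ y₀) GS.qinit (liftPrefix x₀ y₀ r) := by
  induction r using List.reverseRecOn with
  | nil => exact isPrefixFrom_append_singleton_iff.2 ⟨isPrefixFrom_nil _ _, initE_mem_GE, rfl⟩
  | append_singleton r f ih =>
    obtain ⟨hr, hf, hsrc⟩ := isPrefixFrom_append_singleton_iff.1 hr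
    rw [liftPrefix_append_singleton, isPrefixFrom_append_singleton_iff, endSt_liftPrefix, ← hsrc]
    exact ⟨ih hr, liftEdge_mem_GE hf, rfl⟩

lemma endSt_ne_qinit {ρ : List GEdge}
    (hρ : IsPrefixFrom (GE T x₀ y₀) GS.qinit ρ) (hne : ρ ≠ []) :
    EndSt GS.qinit ρ ≠ GS.qinit := by
  obtain ⟨l, e, rfl⟩ := (List.eq_nil_or_concat ρ).resolve_left hne
  rw [List.concat_eq_append, endSt_append_singleton]
  exact snd_snd_ne_qinit_of_mem_GE (hρ.1 e (by simp))

lemma exists_eq_liftPrefix {ρ : List GEdge}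
    (hρ : IsPrefixFrom (GE T x₀ y₀) GS.qinit ρ) {q : RQ} (hq : EndSt GS.qinit ρ = emb q) :
    ∃ r, ρ = liftPrefix x₀ y₀ r ∧ IsPrefixFrom T RQ.q0 r := by
  induction ρ using List.reverseRecOn generalizing q with
  | nil => exact absurd hq.symm (emb_ne_qinit q)
  | append_singleton l e ih =>
    obtain ⟨hl, he, hsrc⟩ := isPrefixFrom_append_singleton_iff.1 hρ
    rw [endSt_append_singleton] at hq
    rcases mem_GE_cases he with ⟨f, hf, rfl⟩ | rfl | rfl | rfl
    · obtain ⟨r, rfl, hr⟩ := ih hl hsrc.symm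
      refine ⟨r ++ [f], (liftPrefix_append_singleton r f).symm,
        isPrefixFrom_append_singleton_iff.2 ⟨hr, hf, emb_injective ?_⟩⟩
      rw [← endSt_liftPrefix]
      exact hsrc
    · exact absurd hq.symm (emb_ne_qstop q)
    · exact absurd hq.symm (emb_ne_qstop q)
    · obtain rfl : l = [] := by
        by_contra hne
        exact endSt_ne_qinit hl hne hsrc.symm
      exact ⟨[], rfl, isPrefixFrom_nil _ _⟩

def liftPlay (x₀ y₀ : ℤ) (πR : ℕ → REdge) : ℕ → GEdge
  | 0 => initE x₀ y₀
  | k + 1 => liftEdge (πR k)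

variable {πR : ℕ → REdge} {n : ℕ}

lemma pref_liftPlay_succ (πR : ℕ → REdge) (n : ℕ) :
    Pref (liftPlay x₀ y₀ πR) (n + 1) = liftPrefix x₀ y₀ (Pref πR n) := by
  simp [Pref, List.ofFn_succ, liftPrefix, List.map_ofFn, liftPlay]
  rfl

lemma isPlay_liftPlay (h : IsPlay T RQ.q0 πR) :
    IsPlay (GE T x₀ y₀) GS.qinit (liftPlay x₀ y₀ πR) := by
  refine isPlay_iff.2 fun k => ?_
  cases k with
  | zero => exact ⟨initE_mem_GE, rfl⟩
  | succ k =>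
    obtain ⟨hk, hsrc⟩ := isPlay_iff.1 h k
    refine ⟨liftEdge_mem_GE hk, ?_⟩
    rw [← endSt_pref, pref_liftPlay_succ, endSt_liftPrefix, endSt_pref, ← hsrc]
    rfl

def stopPlay (x₀ y₀ : ℤ) (πR : ℕ → REdge) (n : ℕ) : ℕ → GEdge :=
  fun k => if k ≤ n then liftPlay x₀ y₀ πR k else if k = n + 1 then stopE else loopE

lemma stopPlay_of_le {k : ℕ} (hk : k ≤ n) :
    stopPlay x₀ y₀ πR n k = liftPlay x₀ y₀ πR k :=
  if_pos hk

lemma stopPlay_succ : stopPlay x₀ y₀ πR n (n + 1) = stopE := by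
  simp [stopPlay]

lemma stopPlay_of_ge {k : ℕ} (hk : n + 2 ≤ k) : stopPlay x₀ y₀ πR n k = loopE := by
  simp only [stopPlay]
  rw [if_neg (by omega), if_neg (by omega)]

lemma pref_stopPlay {k : ℕ} (hk : k ≤ n + 1) :
    Pref (stopPlay x₀ y₀ πR n) k = Pref (liftPlay x₀ y₀ πR) k :=
  pref_congr fun _ hi => stopPlay_of_le (by omega)

lemma isPlay_stopPlay (h : IsPlay T RQ.q0 πR) (hn : StAt RQ.q0 πR n = RQ.q0) :
    IsPlay (GE T x₀ y₀) GS.qinit (stopPlay x₀ y₀ πR n) := by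
  refine isPlay_iff.2 fun k => ?_
  rw [← endSt_pref]
  rcases lt_trichotomy k (n + 1) with hk | rfl | hk
  · rw [pref_stopPlay hk.le, stopPlay_of_le (by omega), endSt_pref]
    exact isPlay_iff.1 (isPlay_liftPlay h) k
  · rw [stopPlay_succ, pref_stopPlay le_rfl, pref_liftPlay_succ, endSt_liftPrefix, endSt_pref, hn]
    exact ⟨stopE_mem_GE, rfl⟩
  · obtain ⟨j, rfl⟩ : ∃ j, k = j + 1 := ⟨k - 1, by omega⟩
    rw [stopPlay_of_ge hk, endSt_pref]
    refine ⟨loopE_mem_GE, ?_⟩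
    rcases (by omega : j = n + 1 ∨ n + 2 ≤ j) with rfl | hj
    · rw [StAt, stopPlay_succ]; rfl
    · rw [StAt, stopPlay_of_ge hj]; rfl

end Lifting

section Objective

variable {x₀ y₀ : ℤ} {πR : ℕ → REdge} {n : ℕ}

def AtOrigin (x₀ y₀ : ℤ) (r : List REdge) : Prop :=
  x₀ + (r.map fun f => f.2.1.1).sum = 0 ∧ y₀ + (r.map fun f => f.2.1.2).sum = 0

def AEZero (π : ℕ → GEdge) : Prop :=
  LimsupLE (AEc (fun e => e.2.1.1) π) 0 ∧ LimsupLE (AEc (fun e => e.2.1.2.1) π) 0 ∧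
    LimsupLE (AEc (fun e => e.2.1.2.2) π) 0

lemma ELc_liftPlay_succ (w : GEdge → ℤ) (πR : ℕ → REdge) (n : ℕ) :
    ELc w (liftPlay x₀ y₀ πR) (n + 1) =
      ∑ i ∈ Finset.range n, w (liftEdge (πR i)) + w (initE x₀ y₀) :=
  Finset.sum_range_succ' _ n

lemma ELc_stopPlay {w : GEdge → ℤ} (hw : w loopE = 0) {m : ℕ} (hm : n + 2 ≤ m) :
    ELc w (stopPlay x₀ y₀ πR n) m =
      ∑ i ∈ Finset.range n, w (liftEdge (πR i)) + w (initE x₀ y₀) + w stopE := by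
  rw [ELc_eq_of_forall_ge (fun k hk => by rw [stopPlay_of_ge hk, hw]) hm, ELc_succ,
    stopPlay_succ, ELc_congr fun k hk => stopPlay_of_le (Nat.lt_succ_iff.1 hk),
    ELc_liftPlay_succ]

lemma aeZero_stopPlay_iff :
    AEZero (stopPlay x₀ y₀ πR n) ↔ AtOrigin x₀ y₀ (Pref πR n) := by
  set X := x₀ + ∑ i ∈ Finset.range n, (πR i).2.1.1
  set Y := y₀ + ∑ i ∈ Finset.range n, (πR i).2.1.2
  have hX : ∀ m ≥ n + 2, ELc (fun e => e.2.1.1) (stopPlay x₀ y₀ πR n) m = X :=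
    fun m hm => by
      rw [ELc_stopPlay rfl hm]
      simp [liftEdge, initE, stopE, X]
      ring
  have hY : ∀ m ≥ n + 2, ELc (fun e => e.2.1.2.1) (stopPlay x₀ y₀ πR n) m = Y :=
    fun m hm => by
      rw [ELc_stopPlay rfl hm]
      simp [liftEdge, initE, stopE, Y]
      ring
  have hZ : ∀ m ≥ n + 2, ELc (fun e => e.2.1.2.2) (stopPlay x₀ y₀ πR n) m = -X - Y :=
    fun m hm => by
      rw [ELc_stopPlay rfl hm]
      simp [liftEdge, initE, stopE, X, Y, Finset.sum_sub_distrib]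
      ring
  rw [AEZero, limsupLE_AEc_iff hX, limsupLE_AEc_iff hY, limsupLE_AEc_iff hZ, AtOrigin,
    sum_map_pref, sum_map_pref]
  norm_cast
  omega

lemma not_aeZero_liftPlay : ¬ AEZero (liftPlay x₀ y₀ πR) := by
  rintro ⟨h₁, h₂, h₃⟩
  have hsum := (h₁.add h₂).add h₃
  rw [← AEc_add, ← AEc_add, limsupLE_AEc_iff (N := 1) (c := 3)] at hsum
  · norm_num at hsum
  · intro m hm
    obtain ⟨m, rfl⟩ : ∃ k, m = k + 1 := ⟨m - 1, by omega⟩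
    rw [ELc_liftPlay_succ]
    simp [liftEdge, initE]
    ring

end Objective

section PlaysOfG

variable {T : Set REdge} {x₀ y₀ : ℤ} {π : ℕ → GEdge} {n : ℕ}

lemma IsPlay.apply_zero (h : IsPlay (GE T x₀ y₀) GS.qinit π) : π 0 = initE x₀ y₀ :=
  eq_initE_of_mem_GE (h.1 0) h.2.1

lemma IsPlay.exists_eq_stopE (h : IsPlay (GE T x₀ y₀) GS.qinit π)
    (hn : StAt GS.qinit π n = GS.qstop) : ∃ k < n, π k = stopE := by
  induction n with
  | zero => exact absurd hn nofun
  | succ n ih =>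
    rcases eq_stopE_or_loopE_of_mem_GE (h.1 n) hn with hs | hl
    · exact ⟨n, n.lt_succ_self, hs⟩
    · obtain ⟨k, hk, hks⟩ := ih (by rw [← (isPlay_iff.1 h n).2, hl]; rfl)
      exact ⟨k, by omega, hks⟩

lemma IsPlay.eq_loopE (h : IsPlay (GE T x₀ y₀) GS.qinit π) (hn : π n = stopE) {k : ℕ}
    (hk : n < k) : π k = loopE := by
  have hstop : ∀ k ≥ n + 1, StAt GS.qinit π k = GS.qstop := by
    intro k hk
    induction k, hk using Nat.le_induction with
    | base => rw [StAt, hn]; rfl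
    | succ k _ ih => rw [StAt, eq_loopE_of_mem_GE (h.1 k) ((isPlay_iff.1 h k).2.trans ih)]; rfl
  exact eq_loopE_of_mem_GE (h.1 k) ((isPlay_iff.1 h k).2.trans (hstop k hk))

def projPlay (π : ℕ → GEdge) : ℕ → REdge :=
  fun k => projEdge (π (k + 1))

lemma pref_projPlay (π : ℕ → GEdge) (n : ℕ) :
    Pref (projPlay π) n = (Pref π (n + 1)).tail.map projEdge := by
  rw [tail_pref_succ, ← pref_map]
  rfl

lemma IsPlay.pref_eq_liftPrefix (h : IsPlay (GE T x₀ y₀) GS.qinit π)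
    (hn : StAt GS.qinit π (n + 1) ≠ GS.qstop) :
    Pref π (n + 1) = liftPrefix x₀ y₀ (Pref (projPlay π) n) ∧
      IsPrefixFrom T RQ.q0 (Pref (projPlay π) n) := by
  obtain ⟨q, hq⟩ := exists_emb_eq _ (snd_snd_ne_qinit_of_mem_GE (h.1 n)) hn
  obtain ⟨r, hr, hrT⟩ :=
    exists_eq_liftPrefix (h.isPrefixFrom_pref (n + 1)) (by rw [endSt_pref]; exact hq.symm)
  obtain rfl : Pref (projPlay π) n = r := by
    rw [pref_projPlay, hr, tail_map_projEdge_liftPrefix]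
  exact ⟨hr, hrT⟩

lemma IsPlay.stAt_succ_eq_emb (h : IsPlay (GE T x₀ y₀) GS.qinit π)
    (hn : StAt GS.qinit π (n + 1) ≠ GS.qstop) :
    StAt GS.qinit π (n + 1) = emb (StAt RQ.q0 (projPlay π) n) := by
  rw [← endSt_pref, (h.pref_eq_liftPrefix hn).1, endSt_liftPrefix, endSt_pref]

end PlaysOfG

section RobotToG

variable {T : Set REdge} {x₀ y₀ : ℤ} {σR : List REdge → REdge} {π : ℕ → GEdge}
  {n : ℕ}

noncomputable def liftStrategy (x₀ y₀ : ℤ) (σR : List REdge → REdge) (ρ : List GEdge) :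
    GEdge :=
  open Classical in
  if ρ = [] then initE x₀ y₀
  else if EndSt GS.qinit ρ = GS.qstop then loopE
  else if AtOrigin x₀ y₀ (ρ.tail.map projEdge) then stopE
  else liftEdge (σR (ρ.tail.map projEdge))

open Classical in
lemma liftStrategy_liftPrefix (σR : List REdge → REdge) (r : List REdge) :
    liftStrategy x₀ y₀ σR (liftPrefix x₀ y₀ r) =
      if AtOrigin x₀ y₀ r then stopE else liftEdge (σR r) := by
  rw [liftStrategy, if_neg (show liftPrefix x₀ y₀ r ≠ [] from List.cons_ne_nil _ _),
    if_neg (by rw [endSt_liftPrefix]; exact emb_ne_qstop _), tail_map_projEdge_liftPrefix]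

lemma isStrategy_liftStrategy (hσ : IsStrategy T {RQ.q0} RQ.q0 σR) :
    IsStrategy (GE T x₀ y₀) {GS.qinit, GS.q0, GS.qstop} GS.qinit
      (liftStrategy x₀ y₀ σR) := by
  intro ρ hρ hmem
  rcases eq_or_ne ρ [] with rfl | hne
  · rw [liftStrategy, if_pos rfl]
    exact ⟨initE_mem_GE, rfl⟩
  rcases hmem with hinit | hq0 | (hstop : EndSt GS.qinit ρ = GS.qstop)
  · exact absurd hinit (endSt_ne_qinit hρ hne)
  · obtain ⟨r, rfl, hr⟩ := exists_eq_liftPrefix hρ (q := RQ.q0) hq0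
    have hend : EndSt RQ.q0 r = RQ.q0 := emb_injective ((endSt_liftPrefix r).symm.trans hq0)
    rw [liftStrategy_liftPrefix, hq0]
    split_ifs
    · exact ⟨stopE_mem_GE, rfl⟩
    · obtain ⟨hT, hsrc⟩ := hσ r hr hend
      exact ⟨liftEdge_mem_GE hT, by rw [liftEdge, hsrc, hend]; rfl⟩
  · rw [liftStrategy, if_neg hne, if_pos hstop]
    exact ⟨loopE_mem_GE, hstop.symm⟩

open Classical in
lemma IsOutcome.liftStrategy_succ
    (hout : IsOutcome (GE T x₀ y₀) {GS.qinit, GS.q0, GS.qstop} GS.qinit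
      (liftStrategy x₀ y₀ σR) π)
    (hn : StAt GS.qinit π (n + 1) ≠ GS.qstop) (hq : StAt RQ.q0 (projPlay π) n = RQ.q0) :
    π (n + 1) = if AtOrigin x₀ y₀ (Pref (projPlay π) n) then stopE
      else liftEdge (σR (Pref (projPlay π) n)) := by
  rw [hout.2 (n + 1) (by rw [endSt_pref, hout.1.stAt_succ_eq_emb hn, hq]; simp [emb]),
    (hout.1.pref_eq_liftPrefix hn).1, liftStrategy_liftPrefix]

/-- If `liftStrategy` never stopped, the projected play would be an outcome of `σR` that never
reaches the origin in `q₀`. -/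
lemma IsOutcome.exists_eq_stopE_of_liftStrategy
    (hwin : ∀ πR, IsOutcome T {RQ.q0} RQ.q0 σR πR →
      ∃ n, StAt RQ.q0 πR n = RQ.q0 ∧ AtOrigin x₀ y₀ (Pref πR n))
    (hout : IsOutcome (GE T x₀ y₀) {GS.qinit, GS.q0, GS.qstop} GS.qinit
      (liftStrategy x₀ y₀ σR) π) :
    ∃ k, π k = stopE := by
  by_contra! hns
  have hnq : ∀ n, StAt GS.qinit π n ≠ GS.qstop := fun n hn =>
    let ⟨k, _, hk⟩ := hout.1.exists_eq_stopE hn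
    hns k hk
  have hstep := fun n => hout.liftStrategy_succ (hnq (n + 1)) (n := n)
  have hplay : IsPlay T RQ.q0 (projPlay π) := isPlay_iff.2 fun k =>
    isPrefixFrom_pref_iff.1 (hout.1.pref_eq_liftPrefix (hnq (k + 2))).2 k k.lt_succ_self
  have houtR : IsOutcome T {RQ.q0} RQ.q0 σR (projPlay π) := by
    refine ⟨hplay, fun n hq => ?_⟩
    rw [endSt_pref] at hq
    have := hstep n hq
    rw [if_neg fun h => hns (n + 1) (by rw [this, if_pos h])] at this
    rw [projPlay, this, projEdge_liftEdge]
  obtain ⟨n, hq, horig⟩ := hwin (projPlay π) houtR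
  exact hns (n + 1) (by rw [hstep n hq, if_pos horig])

lemma IsOutcome.eq_stopPlay_of_liftStrategy
    (hout : IsOutcome (GE T x₀ y₀) {GS.qinit, GS.q0, GS.qstop} GS.qinit
      (liftStrategy x₀ y₀ σR) π)
    (hstop : π (n + 1) = stopE) (hfirst : ∀ k < n + 1, π k ≠ stopE) :
    π = stopPlay x₀ y₀ (projPlay π) n ∧ AtOrigin x₀ y₀ (Pref (projPlay π) n) := by
  have hn : StAt GS.qinit π (n + 1) ≠ GS.qstop := fun h =>
    let ⟨k, hk, hks⟩ := hout.1.exists_eq_stopE h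
    hfirst k hk hks
  have hq : StAt RQ.q0 (projPlay π) n = RQ.q0 := by
    apply emb_injective
    rw [← hout.1.stAt_succ_eq_emb hn, ← (isPlay_iff.1 hout.1 (n + 1)).2, hstop]
    rfl
  have horig : AtOrigin x₀ y₀ (Pref (projPlay π) n) := by
    by_contra h
    rw [hout.liftStrategy_succ hn hq, if_neg h] at hstop
    exact liftEdge_ne_stopE _ hstop
  refine ⟨funext fun k => ?_, horig⟩
  rcases lt_trichotomy k (n + 1) with hk | rfl | hk
  · rw [stopPlay_of_le (by omega)]
    refine eq_of_pref_eq ?_ hk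
    rw [(hout.1.pref_eq_liftPrefix hn).1, pref_liftPlay_succ]
  · rw [hstop, stopPlay_succ]
  · rw [hout.1.eq_loopE hstop hk, stopPlay_of_ge hk]

lemma gWin_of_robotWin (h : RobotWin T x₀ y₀) : GWin T x₀ y₀ := by
  obtain ⟨σR, hσ, hwin⟩ := h
  have hwin' : ∀ πR, IsOutcome T {RQ.q0} RQ.q0 σR πR →
      ∃ n, StAt RQ.q0 πR n = RQ.q0 ∧ AtOrigin x₀ y₀ (Pref πR n) := fun πR hπR => by
    simpa only [AtOrigin, sum_map_pref] using hwin πR hπR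
  refine ⟨liftStrategy x₀ y₀ σR, isStrategy_liftStrategy hσ, fun π hout => ?_⟩
  classical
  have hex := hout.exists_eq_stopE_of_liftStrategy hwin'
  obtain ⟨_ | n, hstop, hfirst⟩ : ∃ N, π N = stopE ∧ ∀ k < N, π k ≠ stopE :=
    ⟨Nat.find hex, Nat.find_spec hex, fun k hk => Nat.find_min hex hk⟩
  · exact absurd (hout.1.apply_zero.symm.trans hstop) nofun
  obtain ⟨hπ, horig⟩ := hout.eq_stopPlay_of_liftStrategy hstop hfirst
  rw [hπ]
  exact aeZero_stopPlay_iff.2 horig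

end RobotToG

section GToRobot

variable {T : Set REdge} {x₀ y₀ : ℤ} {σG : List GEdge → GEdge} {d : REdge}
  {πR : ℕ → REdge}

noncomputable def projStrategy (x₀ y₀ : ℤ) (σG : List GEdge → GEdge) (d : REdge)
    (r : List REdge) : REdge :=
  open Classical in
  if σG (liftPrefix x₀ y₀ r) = stopE then d else projEdge (σG (liftPrefix x₀ y₀ r))

lemma IsStrategy.apply_nil
    (hσ : IsStrategy (GE T x₀ y₀) {GS.qinit, GS.q0, GS.qstop} GS.qinit σG) :
    σG [] = initE x₀ y₀ :=
  let ⟨hmem, hsrc⟩ := hσ [] (isPrefixFrom_nil _ _) (by simp [EndSt])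
  eq_initE_of_mem_GE hmem hsrc

lemma IsStrategy.eq_loopE
    (hσ : IsStrategy (GE T x₀ y₀) {GS.qinit, GS.q0, GS.qstop} GS.qinit σG)
    {ρ : List GEdge} (hρ : IsPrefixFrom (GE T x₀ y₀) GS.qinit ρ)
    (hstop : EndSt GS.qinit ρ = GS.qstop) : σG ρ = loopE :=
  let ⟨hmem, hsrc⟩ := hσ ρ hρ (by simp [hstop])
  eq_loopE_of_mem_GE hmem (hsrc.trans hstop)

lemma IsStrategy.exists_liftPrefix_eq
    (hσ : IsStrategy (GE T x₀ y₀) {GS.qinit, GS.q0, GS.qstop} GS.qinit σG)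
    {r : List REdge} (hr : IsPrefixFrom T RQ.q0 r) (hend : EndSt RQ.q0 r = RQ.q0)
    (hne : σG (liftPrefix x₀ y₀ r) ≠ stopE) :
    ∃ f ∈ T, f.1 = RQ.q0 ∧ σG (liftPrefix x₀ y₀ r) = liftEdge f := by
  have hq0 : EndSt GS.qinit (liftPrefix x₀ y₀ r) = emb RQ.q0 := by rw [endSt_liftPrefix, hend]
  obtain ⟨hmem, hsrc⟩ := hσ _ (isPrefixFrom_liftPrefix hr) (by rw [hq0]; simp [emb])
  exact exists_liftEdge_of_mem_GE hmem (hsrc.trans hq0) hne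

lemma isStrategy_projStrategy
    (hσ : IsStrategy (GE T x₀ y₀) {GS.qinit, GS.q0, GS.qstop} GS.qinit σG)
    (hd : d ∈ T) (hd₀ : d.1 = RQ.q0) :
    IsStrategy T {RQ.q0} RQ.q0 (projStrategy x₀ y₀ σG d) := by
  intro r hr (hend : EndSt RQ.q0 r = RQ.q0)
  rw [projStrategy, hend]
  split_ifs with hstop
  · exact ⟨hd, hd₀⟩
  · obtain ⟨f, hf, hf₀, heq⟩ := hσ.exists_liftPrefix_eq hr hend hstop
    rw [heq, projEdge_liftEdge]
    exact ⟨hf, hf₀⟩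

lemma IsOutcome.liftPlay_succ_eq
    (hσ : IsStrategy (GE T x₀ y₀) {GS.qinit, GS.q0, GS.qstop} GS.qinit σG)
    (hout : IsOutcome T {RQ.q0} RQ.q0 (projStrategy x₀ y₀ σG d) πR) {n : ℕ}
    (hq : StAt RQ.q0 πR n = RQ.q0) (hne : σG (liftPrefix x₀ y₀ (Pref πR n)) ≠ stopE) :
    liftPlay x₀ y₀ πR (n + 1) = σG (Pref (liftPlay x₀ y₀ πR) (n + 1)) := by
  rw [← endSt_pref] at hq
  obtain ⟨f, -, -, heq⟩ := hσ.exists_liftPrefix_eq (hout.1.isPrefixFrom_pref n) hq hne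
  rw [liftPlay, hout.2 n hq, projStrategy, if_neg hne, pref_liftPlay_succ, heq, projEdge_liftEdge]

lemma stAt_eq_q0_of_endSt_mem {n : ℕ}
    (h : EndSt GS.qinit (Pref (liftPlay x₀ y₀ πR) (n + 1)) ∈
      ({GS.qinit, GS.q0, GS.qstop} : Set GS)) :
    StAt RQ.q0 πR n = RQ.q0 := by
  rw [pref_liftPlay_succ, endSt_liftPrefix, endSt_pref] at h
  exact eq_q0_of_emb_mem h

lemma isOutcome_liftPlay
    (hσ : IsStrategy (GE T x₀ y₀) {GS.qinit, GS.q0, GS.qstop} GS.qinit σG)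
    (hout : IsOutcome T {RQ.q0} RQ.q0 (projStrategy x₀ y₀ σG d) πR)
    (hne : ∀ n, StAt RQ.q0 πR n = RQ.q0 → σG (liftPrefix x₀ y₀ (Pref πR n)) ≠ stopE) :
    IsOutcome (GE T x₀ y₀) {GS.qinit, GS.q0, GS.qstop} GS.qinit σG
      (liftPlay x₀ y₀ πR) := by
  refine ⟨isPlay_liftPlay hout.1, fun k hk => ?_⟩
  cases k with
  | zero => exact hσ.apply_nil.symm
  | succ n =>
    have hq := stAt_eq_q0_of_endSt_mem hk
    exact hout.liftPlay_succ_eq hσ hq (hne n hq)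

lemma isOutcome_stopPlay
    (hσ : IsStrategy (GE T x₀ y₀) {GS.qinit, GS.q0, GS.qstop} GS.qinit σG)
    (hout : IsOutcome T {RQ.q0} RQ.q0 (projStrategy x₀ y₀ σG d) πR) {n : ℕ}
    (hq : StAt RQ.q0 πR n = RQ.q0) (hstop : σG (liftPrefix x₀ y₀ (Pref πR n)) = stopE)
    (hfirst : ∀ k < n, StAt RQ.q0 πR k = RQ.q0 →
      σG (liftPrefix x₀ y₀ (Pref πR k)) ≠ stopE) :
    IsOutcome (GE T x₀ y₀) {GS.qinit, GS.q0, GS.qstop} GS.qinit σG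
      (stopPlay x₀ y₀ πR n) := by
  have hplay := isPlay_stopPlay (x₀ := x₀) (y₀ := y₀) hout.1 hq
  refine ⟨hplay, fun k hk => ?_⟩
  rcases lt_trichotomy k (n + 1) with hk' | rfl | hk'
  · rw [pref_stopPlay hk'.le] at hk ⊢
    rw [stopPlay_of_le (by omega)]
    cases k with
    | zero => exact hσ.apply_nil.symm
    | succ k =>
      have hqk := stAt_eq_q0_of_endSt_mem hk
      exact hout.liftPlay_succ_eq hσ hqk (hfirst k (by omega) hqk)
  · rw [stopPlay_succ, pref_stopPlay le_rfl, pref_liftPlay_succ, hstop]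
  · obtain ⟨j, rfl⟩ : ∃ j, k = j + 1 := ⟨k - 1, by omega⟩
    rw [stopPlay_of_ge hk', hσ.eq_loopE (hplay.isPrefixFrom_pref _)]
    rw [endSt_pref, StAt]
    rcases (by omega : j = n + 1 ∨ n + 2 ≤ j) with rfl | hj
    · rw [stopPlay_succ]; rfl
    · rw [stopPlay_of_ge hj]; rfl

lemma robotWin_of_gWin (hT₀ : ∃ d ∈ T, d.1 = RQ.q0) (h : GWin T x₀ y₀) :
    RobotWin T x₀ y₀ := by
  classical
  obtain ⟨σG, hσ, hwin⟩ := h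
  obtain ⟨d, hd, hd₀⟩ := hT₀
  refine ⟨projStrategy x₀ y₀ σG d, isStrategy_projStrategy hσ hd hd₀,
    fun πR hout => ?_⟩
  by_cases hstops :
    ∃ n, StAt RQ.q0 πR n = RQ.q0 ∧ σG (liftPrefix x₀ y₀ (Pref πR n)) = stopE
  · obtain ⟨n, ⟨hq, hstop⟩, hfirst⟩ : ∃ n, (StAt RQ.q0 πR n = RQ.q0 ∧
        σG (liftPrefix x₀ y₀ (Pref πR n)) = stopE) ∧
        ∀ k < n, StAt RQ.q0 πR k = RQ.q0 → σG (liftPrefix x₀ y₀ (Pref πR k)) ≠ stopE :=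
      ⟨Nat.find hstops, Nat.find_spec hstops,
        fun k hk hqk hs => Nat.find_min hstops hk ⟨hqk, hs⟩⟩
    have horig := aeZero_stopPlay_iff.1 (hwin _ (isOutcome_stopPlay hσ hout hq hstop hfirst))
    exact ⟨n, hq, by simpa only [AtOrigin, sum_map_pref] using horig⟩
  · push Not at hstops
    exact absurd (hwin _ (isOutcome_liftPlay hσ hout hstops)) not_aeZero_liftPlay

end GToRobot

theorem statement13_general (T : Set (VEdge RQ (ℤ × ℤ)))
    (htotal : ∀ q : RQ, ∃ (v : ℤ × ℤ) (q' : RQ), (q, v, q') ∈ T)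
    (x₀ y₀ : ℤ) :
    GWin T x₀ y₀ ↔ RobotWin T x₀ y₀ := by
  obtain ⟨v, q', hd⟩ := htotal RQ.q0
  exact ⟨robotWin_of_gWin ⟨(RQ.q0, v, q'), hd, rfl⟩, gWin_of_robotWin⟩

/-- Let `R = ({q₀}, {q₁}, T)` be a two-dimensional robot game with
weights bounded by `V` and initial configuration `(q₀, (x₀, y₀))`, and let `G` be the
3-dimensional weighted game constructed from it. Then `P₀` has a winning strategy in `G`
from `q_init` for the average-energy objective `AE((0,0,0))` if, and only if, `P₀`
wins the robot game `R` from `(q₀, (x₀, y₀))`. -/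
theorem statement13 (T : Set (VEdge RQ (ℤ × ℤ))) (V : ℕ)
    (hbound : ∀ e ∈ T, -(V : ℤ) ≤ e.2.1.1 ∧ e.2.1.1 ≤ (V : ℤ) ∧
      -(V : ℤ) ≤ e.2.1.2 ∧ e.2.1.2 ≤ (V : ℤ))
    (htotal : ∀ q : RQ, ∃ (v : ℤ × ℤ) (q' : RQ), (q, v, q') ∈ T)
    (x₀ y₀ : ℤ) :
    GWin T x₀ y₀ ↔ RobotWin T x₀ y₀ :=
  statement13_general T htotal x₀ y₀

end RobotReduction
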